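/- Fix x, x' ∈ ℝ^d and 1 ≤ b ≤ n. Then E_I[ ‖(1/b) ∑_{i∈I} (∇f_i(x) − ∇f_i(x')) − (∇f(x) − ∇f(x'))‖² ] ≤ (L²/b) ‖x − x'‖², where E_I is the expectation over a uniformly random size-b minibatch. -/

import Mathlib

/-!
Put `gᵢ = ∇fᵢ(x) - ∇fᵢ(x')` and `hᵢ = gᵢ - ḡ`, so that `∑ hᵢ = 0`. Expanding `‖∑_{i ∈ I} hᵢ‖²`
and summing over all batches, every `i` lies in `C(n-1, b-1)` batches and every pair `i ≠ j` in
the same number `B` of batches; the off-diagonal terms therefore add up to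
`B (‖∑ hᵢ‖² - ∑ ‖hᵢ‖²)`, whence the sum over batches is at most `C(n-1, b-1) ∑ ‖hᵢ‖²`. As
`n C(n-1, b-1) = b C(n, b)`, the expectation of `‖b⁻¹ ∑_{i ∈ I} hᵢ‖²` is at most
`(bn)⁻¹ ∑ ‖hᵢ‖² ≤ (bn)⁻¹ ∑ ‖gᵢ‖²`, and `‖gᵢ‖ ≤ L ‖x - x'‖` by smoothness.
-/

noncomputable section

/-- The average function `f = (1/n) ∑ᵢ fᵢ`. -/
noncomputable def avgF {d n : ℕ} (f : Fin n → EuclideanSpace ℝ (Fin d) → ℝ) :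
    EuclideanSpace ℝ (Fin d) → ℝ :=
  fun z => (n : ℝ)⁻¹ * ∑ i, f i z

/-- Expectation (average) of a real-valued function of a uniformly random
size-`b` subset of `{1,…,n}`. -/
noncomputable def expSub (n b : ℕ) (g : Finset (Fin n) → ℝ) : ℝ :=
  (∑ I ∈ Finset.powersetCard b (Finset.univ : Finset (Fin n)), g I) /
    ((Finset.powersetCard b (Finset.univ : Finset (Fin n))).card : ℝ)

open Finset RealInnerProductSpace

section

variable {ι E : Type*} [Fintype ι] [NormedAddCommGroup E] [InnerProductSpace ℝ E]

theorem card_filter_powersetCard_univ_superset [DecidableEq ι] (s : Finset ι) (b : ℕ) :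
    #{I ∈ powersetCard b univ | s ⊆ I} =
      if #s ≤ b then (Fintype.card ι - #s).choose (b - #s) else 0 := by
  split_ifs with hs
  · rw [card_filter_powersetCard_subset s univ b (subset_univ s) hs, card_univ]
  · rw [card_eq_zero, filter_eq_empty_iff]
    intro I hI hsI
    exact hs ((card_le_card hsI).trans (mem_powersetCard.1 hI).2.le)

theorem card_filter_powersetCard_univ_mem_and_mem [DecidableEq ι] {b : ℕ} (hb : 1 ≤ b)
    (i j : ι) :
    (#{I ∈ powersetCard b univ | i ∈ I ∧ j ∈ I} : ℝ) =
      if i = j then ((Fintype.card ι - 1).choose (b - 1) : ℝ)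
      else ((if 2 ≤ b then (Fintype.card ι - 2).choose (b - 2) else 0 : ℕ) : ℝ) := by
  have hpair : ∀ I : Finset ι, i ∈ I ∧ j ∈ I ↔ {i, j} ⊆ I := by
    simp [insert_subset_iff]
  simp_rw [hpair, card_filter_powersetCard_univ_superset]
  split_ifs with hij <;> simp_all

theorem sum_norm_sum_sq_eq_sum_card_mul_inner [DecidableEq ι] (𝒜 : Finset (Finset ι))
    (h : ι → E) :
    ∑ I ∈ 𝒜, ‖∑ i ∈ I, h i‖ ^ 2 =
      ∑ i, ∑ j, (#{I ∈ 𝒜 | i ∈ I ∧ j ∈ I} : ℝ) * ⟪h i, h j⟫ := by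
  have hexpand (I : Finset ι) :
      ‖∑ i ∈ I, h i‖ ^ 2 = ∑ i, ∑ j, if i ∈ I ∧ j ∈ I then ⟪h i, h j⟫ else 0 := by
    rw [← real_inner_self_eq_norm_sq, sum_inner]
    simp [inner_sum, ite_and]
  simp_rw [hexpand, card_filter, Nat.cast_sum, sum_mul]
  rw [sum_comm]
  refine sum_congr rfl fun i _ => ?_
  rw [sum_comm]
  simp

theorem sum_sum_ite_mul_inner_of_sum_eq_zero [DecidableEq ι] (h : ι → E) (hsum : ∑ i, h i = 0)
    (A B : ℝ) :
    ∑ i, ∑ j, (if i = j then A else B) * ⟪h i, h j⟫ = (A - B) * ∑ i, ‖h i‖ ^ 2 := by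
  have hsplit (i j : ι) : (if i = j then A else B) * ⟪h i, h j⟫ =
      B * ⟪h i, h j⟫ + if i = j then (A - B) * ⟪h i, h j⟫ else 0 := by
    split_ifs <;> ring
  simp_rw [hsplit, sum_add_distrib, sum_ite_eq, ← mul_sum, ← inner_sum, hsum, inner_zero_right]
  simp [mul_sum]

theorem sum_powersetCard_norm_sum_sq_le [DecidableEq ι] (h : ι → E) (hsum : ∑ i, h i = 0)
    {b : ℕ} (hb : 1 ≤ b) :
    ∑ I ∈ powersetCard b univ, ‖∑ i ∈ I, h i‖ ^ 2 ≤
      (Fintype.card ι - 1).choose (b - 1) * ∑ i, ‖h i‖ ^ 2 := by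
  simp_rw [sum_norm_sum_sq_eq_sum_card_mul_inner, card_filter_powersetCard_univ_mem_and_mem hb,
    sum_sum_ite_mul_inner_of_sum_eq_zero h hsum]
  gcongr
  exact sub_le_self _ (Nat.cast_nonneg _)

theorem sum_sub_mean_eq_zero (g : ι → E) :
    ∑ i, (g i - (Fintype.card ι : ℝ)⁻¹ • ∑ j, g j) = 0 := by
  rw [sum_sub_distrib, sum_const, card_univ, ← Nat.cast_smul_eq_nsmul ℝ, smul_smul, sub_eq_zero]
  rcases isEmpty_or_nonempty ι with hι | hι
  · simp
  · rw [mul_inv_cancel₀ (by positivity), one_smul]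

theorem sum_norm_sq_le_sum_norm_add_sq_of_sum_eq_zero (h : ι → E) (hsum : ∑ i, h i = 0)
    (c : E) : ∑ i, ‖h i‖ ^ 2 ≤ ∑ i, ‖h i + c‖ ^ 2 := by
  have hexpand : ∑ i, ‖h i + c‖ ^ 2 = ∑ i, ‖h i‖ ^ 2 + ∑ _i : ι, ‖c‖ ^ 2 := by
    simp_rw [norm_add_sq_real, sum_add_distrib, ← mul_sum, ← sum_inner, hsum, inner_zero_left]
    ring
  rw [hexpand]
  exact le_add_of_nonneg_right (by positivity)

theorem expSub_norm_smul_sum_sub_mean_sq_le {n b : ℕ} (g : Fin n → E) (hb : 1 ≤ b) :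
    expSub n b (fun I => ‖(b : ℝ)⁻¹ • ∑ i ∈ I, g i - (n : ℝ)⁻¹ • ∑ i, g i‖ ^ 2)
      ≤ (b : ℝ)⁻¹ * ((n : ℝ)⁻¹ * ∑ i, ‖g i‖ ^ 2) := by
  rcases Nat.eq_zero_or_pos n with rfl | hn
  -- no batches: `expSub` is `0 / 0 = 0`
  · simp [expSub, Nat.choose_eq_zero_of_lt hb]
  set m := (n : ℝ)⁻¹ • ∑ i, g i
  set h := fun i => g i - m
  have hsum : ∑ i, h i = 0 := by
    simpa only [Fintype.card_fin] using sum_sub_mean_eq_zero g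
  have hbatch : ∀ I ∈ powersetCard b univ,
      ‖(b : ℝ)⁻¹ • ∑ i ∈ I, g i - m‖ ^ 2 = (b : ℝ)⁻¹ ^ 2 * ‖∑ i ∈ I, h i‖ ^ 2 := by
    intro I hI
    have hb0 : (b : ℝ) ≠ 0 := by positivity
    have hcentre : (b : ℝ)⁻¹ • ∑ i ∈ I, g i - m = (b : ℝ)⁻¹ • ∑ i ∈ I, h i := by
      simp [h, sum_sub_distrib, (mem_powersetCard.1 hI).2, smul_sub, ← Nat.cast_smul_eq_nsmul ℝ,
        smul_smul, hb0]
    simp [hcentre, norm_smul, mul_pow]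
  have hvar : ∑ i, ‖h i‖ ^ 2 ≤ ∑ i, ‖g i‖ ^ 2 := by
    simpa [h] using sum_norm_sq_le_sum_norm_add_sq_of_sum_eq_zero h hsum m
  have hchoose : (n : ℝ) * (n - 1).choose (b - 1) = n.choose b * b := by
    have := Nat.add_one_mul_choose_eq (n - 1) (b - 1)
    rw [Nat.sub_add_cancel hn, Nat.sub_add_cancel hb] at this
    exact_mod_cast this
  rw [expSub, card_powersetCard, card_univ, Fintype.card_fin, sum_congr rfl hbatch, ← mul_sum]
  apply div_le_of_le_mul₀ (by positivity) (by positivity)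
  calc (b : ℝ)⁻¹ ^ 2 * ∑ I ∈ powersetCard b univ, ‖∑ i ∈ I, h i‖ ^ 2
      ≤ (b : ℝ)⁻¹ ^ 2 * ((n - 1).choose (b - 1) * ∑ i, ‖h i‖ ^ 2) := by
        gcongr
        simpa using sum_powersetCard_norm_sum_sq_le h hsum hb
    _ ≤ (b : ℝ)⁻¹ ^ 2 * ((n - 1).choose (b - 1) * ∑ i, ‖g i‖ ^ 2) := by gcongr
    _ = _ := by
        field_simp
        linear_combination (∑ i, ‖g i‖ ^ 2) * hchoose

end

theorem gradient_avgF {d n : ℕ} (f : Fin n → EuclideanSpace ℝ (Fin d) → ℝ)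
    (hdiff : ∀ i, Differentiable ℝ (f i)) (z : EuclideanSpace ℝ (Fin d)) :
    gradient (avgF f) z = (n : ℝ)⁻¹ • ∑ i, gradient (f i) z := by
  have hfderiv : fderiv ℝ (avgF f) z = (n : ℝ)⁻¹ • ∑ i, fderiv ℝ (f i) z := by
    unfold avgF
    rw [fderiv_const_mul (DifferentiableAt.fun_sum fun i _ => (hdiff i).differentiableAt),
      fderiv_fun_sum fun i _ => (hdiff i).differentiableAt]
  simp only [gradient, hfderiv, map_smul, map_sum]

theorem minibatch_difference_variance_general {d n : ℕ} (L : ℝ)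
    (f : Fin n → EuclideanSpace ℝ (Fin d) → ℝ)
    (hdiff : ∀ i, Differentiable ℝ (f i))
    (hsmooth : ∀ i (x y : EuclideanSpace ℝ (Fin d)),
      ‖gradient (f i) x - gradient (f i) y‖ ≤ L * ‖x - y‖)
    (x x' : EuclideanSpace ℝ (Fin d))
    (b : ℕ) (hb1 : 1 ≤ b) :
    expSub n b (fun I =>
        ‖(b : ℝ)⁻¹ • ∑ i ∈ I, (gradient (f i) x - gradient (f i) x')
          - (gradient (avgF f) x - gradient (avgF f) x')‖ ^ 2)
      ≤ L ^ 2 / (b : ℝ) * ‖x - x'‖ ^ 2 := by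
  set g := fun i => gradient (f i) x - gradient (f i) x'
  have hmean : gradient (avgF f) x - gradient (avgF f) x' = (n : ℝ)⁻¹ • ∑ i, g i := by
    rw [gradient_avgF f hdiff, gradient_avgF f hdiff, ← smul_sub, ← sum_sub_distrib]
  have hsecond_moment : (n : ℝ)⁻¹ * ∑ i, ‖g i‖ ^ 2 ≤ L ^ 2 * ‖x - x'‖ ^ 2 := by
    rw [inv_mul_eq_div]
    refine div_le_of_le_mul₀ (by positivity) (by positivity) ?_
    calc ∑ i, ‖g i‖ ^ 2 ≤ ∑ _i : Fin n, (L * ‖x - x'‖) ^ 2 :=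
          sum_le_sum fun i _ => pow_le_pow_left₀ (norm_nonneg _) (hsmooth i x x') 2
      _ = L ^ 2 * ‖x - x'‖ ^ 2 * n := by simp [mul_pow, mul_comm]
  rw [hmean]
  calc _ ≤ (b : ℝ)⁻¹ * ((n : ℝ)⁻¹ * ∑ i, ‖g i‖ ^ 2) := expSub_norm_smul_sum_sub_mean_sq_le g hb1
    _ ≤ (b : ℝ)⁻¹ * (L ^ 2 * ‖x - x'‖ ^ 2) := by gcongr
    _ = L ^ 2 / b * ‖x - x'‖ ^ 2 := by ring

/-- Variance bound for the minibatch gradient difference: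
`E_I‖(1/b)∑_{i∈I}(∇fᵢ(x) − ∇fᵢ(x')) − (∇f(x) − ∇f(x'))‖² ≤ (L²/b)‖x − x'‖²`. -/
theorem minibatch_difference_variance {d n : ℕ} (hd : 1 ≤ d) (hn : 1 ≤ n)
    (L : ℝ) (hL : 0 < L)
    (f : Fin n → EuclideanSpace ℝ (Fin d) → ℝ)
    (hdiff : ∀ i, Differentiable ℝ (f i))
    (hsmooth : ∀ i (x y : EuclideanSpace ℝ (Fin d)),
      ‖gradient (f i) x - gradient (f i) y‖ ≤ L * ‖x - y‖)
    (x x' : EuclideanSpace ℝ (Fin d))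
    (b : ℕ) (hb1 : 1 ≤ b) (hbn : b ≤ n) :
    expSub n b (fun I =>
        ‖(b : ℝ)⁻¹ • ∑ i ∈ I, (gradient (f i) x - gradient (f i) x')
          - (gradient (avgF f) x - gradient (avgF f) x')‖ ^ 2)
      ≤ L ^ 2 / (b : ℝ) * ‖x - x'‖ ^ 2 :=
  minibatch_difference_variance_general L f hdiff hsmooth x x' b hb1
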